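/- If there exist propelinear perfect binary codes of lengths t and m, each containing the all-zero vector, with ranks r_t and r_m respectively, then there exists a propelinear perfect binary code of length tm + t + m containing the all-zero vector with rank tm + r_t + r_m (obtained as the Mollard code with the zero function f ≡ 0). -/

import Mathlib

open Finset

/-- The binary vector space `F^n`. -/
abbrev F (n : ℕ) : Type := Fin n → ZMod 2

/-- Action of a coordinate permutation: `(π x) i = x (π⁻¹ i)`. -/
def permAct {n : ℕ} (π : Equiv.Perm (Fin n)) (x : F n) : F n := fun i => x (π⁻¹ i)

/-- `(v, π)` is an isometry fixing the code `C` set-wise. -/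
def IsIsoPair {n : ℕ} (C : Set (F n)) (v : F n) (π : Equiv.Perm (Fin n)) : Prop :=
  (fun x => v + permAct π x) '' C = C

/-- `C` is a single-error-correcting perfect binary code. -/
def IsPerfectCode {n : ℕ} (C : Set (F n)) : Prop :=
  ∀ x : F n, ∃! y : F n, y ∈ C ∧ hammingDist x y ≤ 1

/-- `P` is a propelinear structure on the code `C`. -/
def IsPropStructure {n : ℕ} (C : Set (F n)) (P : F n → Equiv.Perm (Fin n)) : Prop :=
  (∀ x ∈ C, IsIsoPair C x (P x)) ∧
  (∀ x ∈ C, ∀ y ∈ C, P (x + permAct (P x) y) = P x * P y)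

/-- `C` admits a propelinear structure. -/
def IsPropelinear {n : ℕ} (C : Set (F n)) : Prop :=
  ∃ P : F n → Equiv.Perm (Fin n), IsPropStructure C P

/-- The rank of a code: dimension of its linear span over GF(2). -/
noncomputable def codeRank {n : ℕ} (C : Set (F n)) : ℕ :=
  Module.finrank (ZMod 2) (Submodule.span (ZMod 2) C)

/-- The kernel of a code `C`: codewords whose translate fixes `C`. -/
def codeKernel {n : ℕ} (C : Set (F n)) : Set (F n) :=
  {x ∈ C | (fun c => x + c) '' C = C}

/-- A propelinear structure is normalized if codewords in the same coset
of the kernel get the same permutation. -/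
def IsNormalized {n : ℕ} (C : Set (F n)) (P : F n → Equiv.Perm (Fin n)) : Prop :=
  ∀ x ∈ C, ∀ y ∈ C, x + y ∈ codeKernel C → P x = P y

/-- A code is transitive if its automorphism group acts transitively on it. -/
def IsTransitive {n : ℕ} (C : Set (F n)) : Prop :=
  ∀ x ∈ C, ∀ y ∈ C, ∃ v π, IsIsoPair C v π ∧ v + permAct π x = y

/-- The (ZMod 2) weight parity `|x| = Σ_i x_i`. -/
def wt {n : ℕ} (x : F n) : ZMod 2 := ∑ i, x i

/-- Assemble a vector of `F^(2n+1)` from a first block of `n` coordinates,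
a middle coordinate and a last block of `n` coordinates. -/
def vasVec {n : ℕ} (a : F n) (b : ZMod 2) (c : F n) : F (2 * n + 1) :=
  fun i =>
    if h : (i : ℕ) < n then a ⟨i, h⟩
    else if h' : (i : ℕ) = n then b
    else c ⟨(i : ℕ) - (n + 1), by have := i.isLt; omega⟩

/-- The Vasil'ev code of `C` with function `lam`. -/
def vasCode {n : ℕ} (C : Set (F n)) (lam : F n → ZMod 2) : Set (F (2 * n + 1)) :=
  {w | ∃ x : F n, ∃ y ∈ C, w = vasVec (x + y) (wt x + lam y) x}

/-- Assemble a vector of `F^(tm+t+m)` from blocks of `tm`, `t` and `m` coordinates. -/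
def mollVec {t m : ℕ} (x : F (t * m)) (b : F t) (c : F m) : F (t * m + t + m) :=
  fun i =>
    if h : (i : ℕ) < t * m then x ⟨i, h⟩
    else if h' : (i : ℕ) < t * m + t then b ⟨(i : ℕ) - t * m, by omega⟩
    else c ⟨(i : ℕ) - (t * m + t), by have := i.isLt; omega⟩

/-- First generalized parity-check function: `p1(x)_i = Σ_j x_{ij}`. -/
def p1 {t m : ℕ} (x : F (t * m)) : F t := fun i => ∑ j : Fin m, x (finProdFinEquiv (i, j))

/-- Second generalized parity-check function: `p2(x)_j = Σ_i x_{ij}`. -/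
def p2 {t m : ℕ} (x : F (t * m)) : F m := fun j => ∑ i : Fin t, x (finProdFinEquiv (i, j))

/-- The Mollard code of `Ct` and `Cm` with function `f`. -/
def mollCode {t m : ℕ} (Ct : Set (F t)) (Cm : Set (F m)) (f : F t → F m) :
    Set (F (t * m + t + m)) :=
  {w | ∃ x : F (t * m), ∃ y ∈ Ct, ∃ z ∈ Cm, w = mollVec x (y + p1 x) (z + p2 x + f y)}

/-! The map `Φ (x, y, z) = (x, y + p1 x, z + p2 x)` is a linear automorphism of
`F^{tm} × F^t × F^m ≅ F^{tm+t+m}`, and the Mollard code with `f ≡ 0` is `Φ (F^{tm} × Cᵗ × Cᵐ)`.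
Its span is therefore `Φ (F^{tm} × ⟨Cᵗ⟩ × ⟨Cᵐ⟩)`, which gives the rank.

A code of length `n` is perfect iff it covers `F^n` with balls of radius one and has
`2^n / (n + 1)` words. The count holds since `|Cᵗ| (t+1) = 2^t`, `|Cᵐ| (m+1) = 2^m` and
`tm + t + m + 1 = (t+1)(m+1)`. For covering, decode the two outer blocks in `Cᵗ` and `Cᵐ`; if
both have an error, at `i` and at `j`, flipping the inner coordinate `(i, j)` moves both errors
into that single inner coordinate.

Propelinear structures `πᵗ`, `πᵐ` lift by sending `Φ (x, y, z)` to the permutation acting as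
`πᵗ_y × πᵐ_z` on the inner block (indexed by `Fin t × Fin m`) and as `πᵗ_y`, `πᵐ_z` on the outer
blocks: this permutation commutes with `Φ` because `p1`, `p2` are equivariant.
-/

section BinaryCodes

variable {n : ℕ}

def errVec : Option (Fin n) → F n
  | none => 0
  | some i => Pi.single i 1

lemma errVec_injective : Function.Injective (errVec (n := n)) := by
  rintro (_ | i) (_ | j) h
  all_goals simp only [errVec, Option.some.injEq] at h ⊢
  · exact absurd h.symm (Pi.single_ne_zero_iff.mpr one_ne_zero)
  · exact absurd h (Pi.single_ne_zero_iff.mpr one_ne_zero)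
  · simpa [Pi.single_apply, eq_comm] using congrFun h i

lemma hammingNorm_le_one_iff_exists_errVec {d : F n} :
    hammingNorm d ≤ 1 ↔ ∃ e, d = errVec e := by
  constructor
  · intro hd
    by_cases h0 : d = 0
    · exact ⟨none, h0⟩
    obtain ⟨i, hi⟩ := Function.ne_iff.mp h0
    refine ⟨some i, funext fun j => ?_⟩
    by_cases hji : j = i
    · have hbit : ∀ a : ZMod 2, a ≠ 0 → a = 1 := by decide
      simp [errVec, hji, hbit _ hi]
    · have hj : d j = 0 := by
        by_contra hj
        exact hji (Finset.card_le_one.mp hd j (by simpa using hj) i (by simpa using hi))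
      simp [errVec, hj, hji]
  · rintro ⟨_ | i, rfl⟩
    · simp [errVec]
    · refine Finset.card_le_one.mpr fun a ha b hb => ?_
      simp only [errVec, Finset.mem_filter, Finset.mem_univ, true_and, ne_eq,
        Pi.single_apply, ite_eq_right_iff, one_ne_zero, imp_false, not_not] at ha hb
      rw [ha, hb]

lemma hammingDist_le_one_iff_exists_errVec {x y : F n} :
    hammingDist x y ≤ 1 ↔ ∃ e, y + errVec e = x := by
  rw [hammingDist_eq_hammingNorm, ZModModule.neg_eq_self, hammingNorm_le_one_iff_exists_errVec]
  refine exists_congr fun e => ?_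
  rw [← ZModModule.sub_eq_add, sub_eq_iff_eq_add', eq_comm]

lemma isPerfectCode_iff_bijective {C : Set (F n)} :
    IsPerfectCode C ↔
      Function.Bijective fun p : C × Option (Fin n) => (p.1 : F n) + errVec p.2 := by
  rw [Function.bijective_iff_existsUnique]
  refine forall_congr' fun x => ⟨?_, ?_⟩
  · rintro ⟨y, ⟨hy, hd⟩, huniq⟩
    obtain ⟨e, rfl⟩ := hammingDist_le_one_iff_exists_errVec.mp hd
    refine ⟨(⟨y, hy⟩, e), rfl, ?_⟩
    rintro ⟨⟨y', hy'⟩, e'⟩ (h : y' + errVec e' = y + errVec e)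
    obtain rfl : y' = y := huniq y' ⟨hy', hammingDist_le_one_iff_exists_errVec.mpr ⟨e', h⟩⟩
    obtain rfl := errVec_injective (add_left_cancel h)
    rfl
  · rintro ⟨⟨⟨y, hy⟩, e⟩, h, huniq⟩
    refine ⟨y, ⟨hy, hammingDist_le_one_iff_exists_errVec.mpr ⟨e, h⟩⟩, ?_⟩
    rintro y' ⟨hy', hd⟩
    obtain ⟨e', h'⟩ := hammingDist_le_one_iff_exists_errVec.mp hd
    exact congrArg (fun p : C × Option (Fin n) => (p.1 : F n)) (huniq (⟨y', hy'⟩, e') h')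

lemma isPerfectCode_iff_covering_and_ncard {C : Set (F n)} :
    IsPerfectCode C ↔ (∀ x, ∃ y ∈ C, ∃ e, y + errVec e = x) ∧ C.ncard * (n + 1) = 2 ^ n := by
  rw [isPerfectCode_iff_bijective, Nat.bijective_iff_surjective_and_card]
  refine and_congr ⟨fun h x => ?_, fun h x => ?_⟩ ?_
  · obtain ⟨⟨⟨y, hy⟩, e⟩, rfl⟩ := h x
    exact ⟨y, hy, e, rfl⟩
  · obtain ⟨y, hy, e, rfl⟩ := h x
    exact ⟨(⟨y, hy⟩, e), rfl⟩
  · simp [Nat.card_coe_set_eq]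

lemma permAct_add (π : Equiv.Perm (Fin n)) (x y : F n) :
    permAct π (x + y) = permAct π x + permAct π y := rfl

lemma permAct_surjective (π : Equiv.Perm (Fin n)) : Function.Surjective (permAct π) :=
  fun x => ⟨permAct π⁻¹ x, funext fun i => by simp [permAct]⟩

end BinaryCodes

lemma Submodule.finrank_prod {K V W : Type*} [DivisionRing K] [AddCommGroup V] [Module K V]
    [AddCommGroup W] [Module K W] [FiniteDimensional K V] [FiniteDimensional K W]
    (p : Submodule K V) (q : Submodule K W) :
    Module.finrank K (p.prod q) = Module.finrank K p + Module.finrank K q := by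
  rw [← Module.finrank_prod, ← LinearMap.finrank_range_of_inj (f := p.subtype.prodMap q.subtype)
    (Prod.map_injective.mpr ⟨p.injective_subtype, q.injective_subtype⟩),
    LinearMap.range_prodMap, p.range_subtype, q.range_subtype]

section Mollard

variable {t m : ℕ}

def blockEquiv (t m : ℕ) : (Fin (t * m) ⊕ Fin t) ⊕ Fin m ≃ Fin (t * m + t + m) :=
  (Equiv.sumCongr finSumFinEquiv (Equiv.refl (Fin m))).trans finSumFinEquiv

lemma mollVec_eq_comp (x : F (t * m)) (b : F t) (c : F m) :
    mollVec x b c = Sum.elim (Sum.elim x b) c ∘ (blockEquiv t m).symm := by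
  rw [Equiv.eq_comp_symm]
  funext k
  rcases k with (i | i) | i <;> simp [mollVec, blockEquiv]
  exact fun h => absurd h (by omega)

def blockLinearEquiv (t m : ℕ) : (F (t * m) × F t × F m) ≃ₗ[ZMod 2] F (t * m + t + m) :=
  (LinearEquiv.prodAssoc (ZMod 2) _ _ _).symm ≪≫ₗ
    ((LinearEquiv.sumArrowLequivProdArrow _ _ _ _).symm.prodCongr (LinearEquiv.refl _ _)) ≪≫ₗ
    (LinearEquiv.sumArrowLequivProdArrow _ _ _ _).symm ≪≫ₗ
    LinearEquiv.funCongrLeft _ _ (blockEquiv t m).symm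

lemma blockLinearEquiv_apply (x : F (t * m)) (b : F t) (c : F m) :
    blockLinearEquiv t m (x, b, c) = mollVec x b c := by
  rw [mollVec_eq_comp]; rfl

lemma mollVec_add (x x' : F (t * m)) (b b' : F t) (c c' : F m) :
    mollVec x b c + mollVec x' b' c' = mollVec (x + x') (b + b') (c + c') := by
  simp only [← blockLinearEquiv_apply, ← map_add, Prod.mk_add_mk]

lemma mollVec_zero : mollVec (0 : F (t * m)) (0 : F t) (0 : F m) = 0 := by
  rw [← blockLinearEquiv_apply]
  exact map_zero _

lemma mollVec_single_zero_zero (k : Fin (t * m)) :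
    mollVec (Pi.single k 1) 0 0 = Pi.single (blockEquiv t m (.inl (.inl k))) 1 := by
  simp [mollVec_eq_comp, Pi.single_comp_equiv]

lemma mollVec_zero_single_zero (i : Fin t) :
    mollVec 0 (Pi.single i 1) (0 : F m) = Pi.single (blockEquiv t m (.inl (.inr i))) 1 := by
  simp [mollVec_eq_comp, Pi.single_comp_equiv]

lemma mollVec_zero_zero_single (j : Fin m) :
    mollVec 0 (0 : F t) (Pi.single j 1) = Pi.single (blockEquiv t m (.inr j)) 1 := by
  simp [mollVec_eq_comp, Pi.single_comp_equiv]

def parityCheck (t m : ℕ) : F (t * m) →ₗ[ZMod 2] F t × F m where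
  toFun x := (p1 x, p2 x)
  map_add' x y := by ext <;> simp [p1, p2, Finset.sum_add_distrib]
  map_smul' r x := by ext <;> simp [p1, p2, Finset.mul_sum]

lemma p1_zero : p1 (0 : F (t * m)) = 0 := congrArg Prod.fst (map_zero (parityCheck t m))

lemma p2_zero : p2 (0 : F (t * m)) = 0 := congrArg Prod.snd (map_zero (parityCheck t m))

lemma p1_single (i : Fin t) (j : Fin m) :
    p1 (Pi.single (finProdFinEquiv (i, j)) 1) = Pi.single i 1 := by
  funext i'
  simp only [p1, Pi.single_apply, EmbeddingLike.apply_eq_iff_eq, Prod.mk.injEq]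
  by_cases h : i' = i <;> simp [h]

lemma p2_single (i : Fin t) (j : Fin m) :
    p2 (Pi.single (finProdFinEquiv (i, j)) 1) = Pi.single j 1 := by
  funext j'
  simp only [p2, Pi.single_apply, EmbeddingLike.apply_eq_iff_eq, Prod.mk.injEq]
  by_cases h : j' = j <;> simp [h]

def mollardEquiv (t m : ℕ) : (F (t * m) × F t × F m) ≃ₗ[ZMod 2] F (t * m + t + m) :=
  (LinearEquiv.refl _ _).skewProd (LinearEquiv.refl _ _) (parityCheck t m) ≪≫ₗ
    blockLinearEquiv t m

lemma mollardEquiv_apply (x : F (t * m)) (y : F t) (z : F m) :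
    mollardEquiv t m (x, y, z) = mollVec x (y + p1 x) (z + p2 x) := by
  simp [mollardEquiv, ← blockLinearEquiv_apply, parityCheck]

lemma mollCode_zero_eq_image (Ct : Set (F t)) (Cm : Set (F m)) :
    mollCode Ct Cm (fun _ => 0) = mollardEquiv t m '' (Set.univ ×ˢ Ct ×ˢ Cm) := by
  ext w
  simp only [mollCode, add_zero, Set.mem_ofPred_eq, Set.mem_image, Set.mem_prod, Set.mem_univ,
    true_and, Prod.exists, mollardEquiv_apply]
  exact ⟨fun ⟨x, y, hy, z, hz, hw⟩ => ⟨x, y, z, ⟨hy, hz⟩, hw.symm⟩,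
    fun ⟨x, y, z, ⟨hy, hz⟩, hw⟩ => ⟨x, y, hy, z, hz, hw.symm⟩⟩

lemma exists_mollardEquiv_add_errVec (a : Option (Fin t)) (b : Option (Fin m)) :
    ∃ x e, mollardEquiv t m (x, 0, 0) + errVec e = mollardEquiv t m (0, errVec a, errVec b) := by
  simp only [mollardEquiv_apply, p1_zero, p2_zero, add_zero]
  rcases a with _ | i <;> rcases b with _ | j
  · exact ⟨0, none, by simp [errVec, p1_zero, p2_zero, mollVec_zero]⟩
  · exact ⟨0, some (blockEquiv t m (.inr j)),
      by simp [errVec, p1_zero, p2_zero, mollVec_zero, mollVec_zero_zero_single]⟩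
  · exact ⟨0, some (blockEquiv t m (.inl (.inr i))),
      by simp [errVec, p1_zero, p2_zero, mollVec_zero, mollVec_zero_single_zero]⟩
  · refine ⟨Pi.single (finProdFinEquiv (i, j)) 1,
      some (blockEquiv t m (.inl (.inl (finProdFinEquiv (i, j))))), ?_⟩
    rw [errVec, ← mollVec_single_zero_zero, p1_single, p2_single, mollVec_add,
      ZModModule.add_self]
    simp [errVec]

lemma ncard_image_mollardEquiv (Ct : Set (F t)) (Cm : Set (F m)) :
    (mollardEquiv t m '' (Set.univ ×ˢ Ct ×ˢ Cm)).ncard =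
      2 ^ (t * m) * (Ct.ncard * Cm.ncard) := by
  rw [Set.ncard_image_of_injective _ (mollardEquiv t m).injective, Set.ncard_prod, Set.ncard_prod,
    Set.ncard_univ]
  simp

lemma isPerfectCode_mollCode {Ct : Set (F t)} {Cm : Set (F m)}
    (ht : IsPerfectCode Ct) (hm : IsPerfectCode Cm) :
    IsPerfectCode (mollCode Ct Cm fun _ => 0) := by
  rw [isPerfectCode_iff_covering_and_ncard] at ht hm ⊢
  rw [mollCode_zero_eq_image]
  refine ⟨fun w => ?_, ?_⟩
  · obtain ⟨⟨x, s, u⟩, rfl⟩ := (mollardEquiv t m).surjective w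
    obtain ⟨y, hy, a, rfl⟩ := ht.1 s
    obtain ⟨z, hz, b, rfl⟩ := hm.1 u
    obtain ⟨x₀, e, he⟩ := exists_mollardEquiv_add_errVec a b
    refine ⟨mollardEquiv t m (x + x₀, y, z), ⟨_, ⟨trivial, hy, hz⟩, rfl⟩, e, ?_⟩
    rw [show (x + x₀, y, z) = (x, y, z) + (x₀, 0, 0) by simp,
      show (x, y + errVec a, z + errVec b) = (x, y, z) + (0, errVec a, errVec b) by simp,
      map_add, map_add, ← he]
    exact add_assoc _ _ _
  · rw [ncard_image_mollardEquiv]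
    calc 2 ^ (t * m) * (Ct.ncard * Cm.ncard) * (t * m + t + m + 1)
        = 2 ^ (t * m) * (Ct.ncard * (t + 1)) * (Cm.ncard * (m + 1)) := by ring
      _ = 2 ^ (t * m + t + m) := by rw [ht.2, hm.2, pow_add, pow_add, mul_assoc]

lemma codeRank_mollCode {Ct : Set (F t)} {Cm : Set (F m)} (h0t : (0 : F t) ∈ Ct)
    (h0m : (0 : F m) ∈ Cm) :
    codeRank (mollCode Ct Cm fun _ => 0) = t * m + codeRank Ct + codeRank Cm := by
  rw [codeRank, mollCode_zero_eq_image, ← LinearEquiv.coe_toLinearMap, ← Submodule.map_span,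
    LinearEquiv.finrank_map_eq, Submodule.span_prod_eq _ (Set.mem_univ 0)
      (show (0 : F t × F m) ∈ Ct ×ˢ Cm from ⟨h0t, h0m⟩),
    Submodule.span_prod_eq _ h0t h0m, Submodule.finrank_prod, Submodule.finrank_prod,
    Submodule.span_univ, finrank_top, Module.finrank_fin_fun, codeRank, codeRank, add_assoc]

def prodPerm (α : Equiv.Perm (Fin t)) (β : Equiv.Perm (Fin m)) : Equiv.Perm (Fin (t * m)) :=
  finProdFinEquiv.permCongr (α.prodCongr β)

def mollardPerm (α : Equiv.Perm (Fin t)) (β : Equiv.Perm (Fin m)) :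
    Equiv.Perm (Fin (t * m + t + m)) :=
  (blockEquiv t m).permCongr (((prodPerm α β).sumCongr α).sumCongr β)

lemma prodPerm_mul (α α' : Equiv.Perm (Fin t)) (β β' : Equiv.Perm (Fin m)) :
    prodPerm (α * α') (β * β') = prodPerm α β * prodPerm α' β' := by
  ext k
  simp [prodPerm, Equiv.permCongr_apply, Equiv.Perm.mul_apply]

lemma mollardPerm_mul (α α' : Equiv.Perm (Fin t)) (β β' : Equiv.Perm (Fin m)) :
    mollardPerm (α * α') (β * β') = mollardPerm α β * mollardPerm α' β' := by
  rw [mollardPerm, mollardPerm, mollardPerm, prodPerm_mul, ← Equiv.Perm.sumCongr_mul,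
    ← Equiv.Perm.sumCongr_mul, Equiv.permCongr_mul]

lemma p1_permAct (α : Equiv.Perm (Fin t)) (β : Equiv.Perm (Fin m)) (x : F (t * m)) :
    p1 (permAct (prodPerm α β) x) = permAct α (p1 x) := by
  funext i
  simp only [p1, permAct, prodPerm, Equiv.permCongr_def, Equiv.Perm.inv_def,
    Equiv.symm_trans_apply]
  exact Fintype.sum_equiv β⁻¹ _ _ fun j => by simp

lemma p2_permAct (α : Equiv.Perm (Fin t)) (β : Equiv.Perm (Fin m)) (x : F (t * m)) :
    p2 (permAct (prodPerm α β) x) = permAct β (p2 x) := by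
  funext j
  simp only [p2, permAct, prodPerm, Equiv.permCongr_def, Equiv.Perm.inv_def,
    Equiv.symm_trans_apply]
  exact Fintype.sum_equiv α⁻¹ _ _ fun i => by simp

lemma permAct_mollardPerm_mollVec (α : Equiv.Perm (Fin t)) (β : Equiv.Perm (Fin m))
    (x : F (t * m)) (b : F t) (c : F m) :
    permAct (mollardPerm α β) (mollVec x b c) =
      mollVec (permAct (prodPerm α β) x) (permAct α b) (permAct β c) := by
  funext v
  simp only [permAct, mollVec_eq_comp, mollardPerm, Function.comp_apply, Equiv.permCongr_def,
    Equiv.Perm.inv_def, Equiv.symm_trans_apply, Equiv.symm_symm, Equiv.symm_apply_apply]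
  rcases (blockEquiv t m).symm v with (k | i) | j <;> rfl

lemma permAct_mollardEquiv (α : Equiv.Perm (Fin t)) (β : Equiv.Perm (Fin m))
    (x : F (t * m)) (y : F t) (z : F m) :
    permAct (mollardPerm α β) (mollardEquiv t m (x, y, z)) =
      mollardEquiv t m (permAct (prodPerm α β) x, permAct α y, permAct β z) := by
  simp only [mollardEquiv_apply, permAct_mollardPerm_mollVec, permAct_add, p1_permAct,
    p2_permAct]

lemma image_add_permAct_mollardEquiv (x : F (t * m)) (y : F t) (z : F m)
    (α : Equiv.Perm (Fin t)) (β : Equiv.Perm (Fin m)) (A : Set (F t)) (B : Set (F m)) :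
    (fun w => mollardEquiv t m (x, y, z) + permAct (mollardPerm α β) w) ''
        (mollardEquiv t m '' (Set.univ ×ˢ A ×ˢ B)) =
      mollardEquiv t m '' (Set.univ ×ˢ ((fun c => y + permAct α c) '' A) ×ˢ
        ((fun c => z + permAct β c) '' B)) := by
  have hx : Function.Surjective fun x' => x + permAct (prodPerm α β) x' :=
    (add_left_surjective x).comp (permAct_surjective _)
  have hS : Set.univ ×ˢ ((fun c => y + permAct α c) '' A) ×ˢ ((fun c => z + permAct β c) '' B) =
      (fun p => (x + permAct (prodPerm α β) p.1, y + permAct α p.2.1, z + permAct β p.2.2)) ''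
        (Set.univ ×ˢ A ×ˢ B) := by
    conv_lhs => rw [← Set.image_univ_of_surjective hx]
    rw [Set.prod_image_image_eq, Set.prod_image_image_eq]
  rw [hS, Set.image_image, Set.image_image]
  refine Set.image_congr fun ⟨x', y', z'⟩ _ => ?_
  rw [permAct_mollardEquiv, ← map_add]
  rfl

lemma isPropelinear_mollCode {Ct : Set (F t)} {Cm : Set (F m)}
    (ht : IsPropelinear Ct) (hm : IsPropelinear Cm) :
    IsPropelinear (mollCode Ct Cm fun _ => 0) := by
  obtain ⟨Pt, hPt_iso, hPt_mul⟩ := ht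
  obtain ⟨Pm, hPm_iso, hPm_mul⟩ := hm
  rw [mollCode_zero_eq_image]
  refine ⟨fun w => mollardPerm (Pt ((mollardEquiv t m).symm w).2.1)
    (Pm ((mollardEquiv t m).symm w).2.2), ?_, ?_⟩
  · rintro _ ⟨⟨x, y, z⟩, ⟨-, hy, hz⟩, rfl⟩
    simp only [IsIsoPair, LinearEquiv.symm_apply_apply]
    rw [image_add_permAct_mollardEquiv, hPt_iso y hy, hPm_iso z hz]
  · rintro _ ⟨⟨x, y, z⟩, ⟨-, hy, hz⟩, rfl⟩ _ ⟨⟨x', y', z'⟩, ⟨-, hy', hz'⟩, rfl⟩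
    simp only [LinearEquiv.symm_apply_apply, permAct_mollardEquiv, ← map_add, Prod.mk_add_mk]
    rw [hPt_mul y hy y' hy', hPm_mul z hz z' hz', mollardPerm_mul]

end Mollard

/-- From propelinear perfect codes of lengths `t` and `m` with ranks `rt`, `rm`
one obtains a propelinear perfect code of length `tm+t+m` and rank `tm+rt+rm`. -/
theorem mollard_rank_transfer {t m rt rm : ℕ}
    (ht : ∃ Ct : Set (F t),
      IsPerfectCode Ct ∧ (0 : F t) ∈ Ct ∧ IsPropelinear Ct ∧ codeRank Ct = rt)
    (hm : ∃ Cm : Set (F m),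
      IsPerfectCode Cm ∧ (0 : F m) ∈ Cm ∧ IsPropelinear Cm ∧ codeRank Cm = rm) :
    ∃ C : Set (F (t * m + t + m)),
      IsPerfectCode C ∧ (0 : F (t * m + t + m)) ∈ C ∧ IsPropelinear C ∧
        codeRank C = t * m + rt + rm := by
  obtain ⟨Ct, hCt_perfect, h0t, hCt_prop, rfl⟩ := ht
  obtain ⟨Cm, hCm_perfect, h0m, hCm_prop, rfl⟩ := hm
  refine ⟨mollCode Ct Cm fun _ => 0, isPerfectCode_mollCode hCt_perfect hCm_perfect, ?_,
    isPropelinear_mollCode hCt_prop hCm_prop, codeRank_mollCode h0t h0m⟩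
  rw [mollCode_zero_eq_image]
  exact ⟨0, ⟨trivial, h0t, h0m⟩, map_zero _⟩
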